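/- Let n ≥ 2. Let P_ξ, P_η be diagonal positive definite n×n real matrices, and Q_ξ, Q_η be n×n real matrices with Q_ξ + Q_ξᵀ = E_N − E_0 and Q_η + Q_ηᵀ = E_N − E_0, where E_0 = diag(1,0,…,0), E_N = diag(0,…,0,1); set D_ξ = P_ξ⁻¹·Q_ξ and D_η = P_η⁻¹·Q_η. Let β_v, β_l, k_v, k_l, T_δ, σ_v¹, σ_v², σ_v³, σ_l¹, σ_l², σ_l³ be real constants. Let T_v, T_l : ℝ → ℝⁿ be differentiable, let J_v, J_l : ℝ → (diagonal n×n matrices with nonzero diagonal entries) be differentiable, and let A_v, A_l : ℝ → (diagonal n×n matrices). Suppose that for all τ: (β_v/2)·((J_v·T_v)' + J_v·T_v' + D_ξ·A_v·T_v + A_v·D_ξ·T_v) = k_v·D_ξ·(J_v⁻¹·D_ξ·T_v) + P_ξ⁻¹·(σ_v¹·((T_v)_{n-1} − T_δ)·e_{n-1} + σ_v²·((T_v)_{n-1} − (T_l)_0)·e_{n-1} + σ_v³·D_ξᵀ·(((T_v)_{n-1} − T_δ)·e_{n-1})), and (β_l/2)·((J_l·T_l)' + J_l·T_l' + D_η·A_l·T_l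 + A_l·D_η·T_l) = k_l·D_η·(J_l⁻¹·D_η·T_l) + P_η⁻¹·(σ_l¹·((T_l)_0 − T_δ)·e_0 + σ_l²·((T_l)_0 − (T_v)_{n-1})·e_0 + σ_l³·D_ηᵀ·(((T_l)_0 − T_δ)·e_0)), where e_0, e_{n-1} are the first and last standard basis vectors. Then for all τ: d/dτ( β_v·T_vᵀ·P_ξ·J_v·T_v + β_l·T_lᵀ·P_η·J_l·T_l ) + 2·k_v·(D_ξ·T_v)ᵀ·P_ξ·J_v⁻¹·(D_ξ·T_v) + 2·k_l·(D_η·T_l)ᵀ·P_η·J_l⁻¹·(D_η·T_l) = IT + SAT + BT, where IT = −β_v·(A_v)_{n-1,n-1}·(T_v)_{n-1}² + 2·k_v·(T_v)_{n-1}·(J_v⁻¹·D_ξ·T_v)_{n-1} + β_l·(A_l)_{0,0}·(T_l)_0² − 2·k_l·(T_l)_0·(J_l⁻¹·D_η·T_l)_0, SAT = 2·(σ_v¹·(T_v)_{n-1}·((T_v)_{n-1} − T_δ) + σ_v²·(T_v)_{n-1}·((T_v)_{n-1} − (T_l)_0) + σ_v³·(D_ξ·T_v)_{n-1}·((T_v)_{n-1}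 − T_δ)) + 2·(σ_l¹·(T_l)_0·((T_l)_0 − T_δ) + σ_l²·(T_l)_0·((T_l)_0 − (T_v)_{n-1}) + σ_l³·(D_η·T_l)_0·((T_l)_0 − T_δ)), and BT = β_v·(A_v)_{0,0}·(T_v)_0² − 2·k_v·(T_v)_0·(J_v⁻¹·D_ξ·T_v)_0 − β_l·(A_l)_{n-1,n-1}·(T_l)_{n-1}² + 2·k_l·(T_l)_{n-1}·(J_l⁻¹·D_η·T_l)_{n-1}. -/

import Mathlib

/-!
Energy method. Testing each phase's scheme against `P T`: the split time derivative
`(J T)' + J T'` is exactly twice the derivative of `Tᵀ P J T`; the split advection `D A + A D` and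
the SBP property `Q + Qᵀ = E_N − E_0` reduce the advection terms to boundary values; and one
summation by parts in the diffusion term produces the dissipation `(D T)ᵀ P J⁻¹ (D T)` plus boundary
values. Adding the two phases gives the identity.
-/

open Matrix

section MatrixIdentities

variable {ι R : Type*} [Fintype ι] [DecidableEq ι]

lemma diagonal_mulVec_dotProduct [CommSemiring R] (d x y : ι → R) :
    (diagonal d *ᵥ x) ⬝ᵥ y = x ⬝ᵥ (diagonal d *ᵥ y) := by
  rw [dotProduct_comm, dotProduct_mulVec, ← mulVec_transpose, diagonal_transpose,
    dotProduct_comm]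

lemma diagonal_mulVec_dotProduct_diagonal_mulVec_comm [CommSemiring R] (d e x y : ι → R) :
    (diagonal d *ᵥ x) ⬝ᵥ (diagonal e *ᵥ y) = (diagonal e *ᵥ x) ⬝ᵥ (diagonal d *ᵥ y) := by
  simp only [dotProduct, mulVec_diagonal]
  exact Finset.sum_congr rfl fun _ _ => by ring

lemma diagonal_mulVec_diagonal_inv_mulVec [Field R] {P : ι → R} (hP : ∀ i, P i ≠ 0)
    (y : ι → R) :
    diagonal P *ᵥ ((diagonal fun i => (P i)⁻¹) *ᵥ y) = y := by
  ext i
  simp [mulVec_diagonal, hP i]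

lemma dotProduct_single_mulVec_self [CommSemiring R] (a : ι) (x z : ι → R) :
    x ⬝ᵥ (Matrix.single a a 1 *ᵥ z) = x a * z a := by
  rw [single_mulVec_eq, dotProduct_smul, dotProduct_single, smul_eq_mul, one_mul, mul_one,
    mul_comm]

lemma dotProduct_mulVec_add_of_sbp [CommRing R] {Q : Matrix ι ι R} {a b : ι}
    (hQ : Q + Qᵀ = Matrix.single a a 1 - Matrix.single b b 1) (x z : ι → R) :
    x ⬝ᵥ (Q *ᵥ z) + z ⬝ᵥ (Q *ᵥ x) = x a * z a - x b * z b := by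
  rw [show z ⬝ᵥ (Q *ᵥ x) = x ⬝ᵥ (Qᵀ *ᵥ z) by
      rw [mulVec_transpose, dotProduct_mulVec, dotProduct_comm],
    ← dotProduct_add, ← add_mulVec, hQ, sub_mulVec, dotProduct_sub,
    dotProduct_single_mulVec_self, dotProduct_single_mulVec_self]

lemma dotProduct_penalty_eq [CommRing R] (D : Matrix ι ι R) (T : ι → R) (a : ι)
    (σ₁ σ₂ σ₃ c₁ c₂ c₃ : R) :
    T ⬝ᵥ (σ₁ • (c₁ • Pi.single a 1) + σ₂ • (c₂ • Pi.single a 1)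
        + σ₃ • (Dᵀ *ᵥ (c₃ • Pi.single a 1)))
      = σ₁ * T a * c₁ + σ₂ * T a * c₂ + σ₃ * (D *ᵥ T) a * c₃ := by
  simp only [dotProduct_add, dotProduct_smul, dotProduct_mulVec T Dᵀ, vecMul_transpose,
    dotProduct_single, smul_eq_mul]
  ring

end MatrixIdentities

section SBP

variable {ι K : Type*} [Fintype ι] [DecidableEq ι] [Field K] {P : ι → K} {Q : Matrix ι ι K}
  {a b : ι}

lemma diagonal_mulVec_diagonal_inv_mul_mulVec (hP : ∀ i, P i ≠ 0) (y : ι → K) :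
    diagonal P *ᵥ (((diagonal fun i => (P i)⁻¹) * Q) *ᵥ y) = Q *ᵥ y := by
  rw [← mulVec_mulVec, diagonal_mulVec_diagonal_inv_mulVec hP]

lemma diagonal_mulVec_dotProduct_diagonal_inv_mul_mulVec (hP : ∀ i, P i ≠ 0) (x y : ι → K) :
    (diagonal P *ᵥ x) ⬝ᵥ (((diagonal fun i => (P i)⁻¹) * Q) *ᵥ y) = x ⬝ᵥ (Q *ᵥ y) := by
  rw [diagonal_mulVec_dotProduct, diagonal_mulVec_diagonal_inv_mul_mulVec hP]

variable (hP : ∀ i, P i ≠ 0) (hQ : Q + Qᵀ = Matrix.single a a 1 - Matrix.single b b 1)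
include hP hQ

lemma sbp_split_advection_eq (A T : ι → K) :
    (diagonal P *ᵥ T) ⬝ᵥ (((diagonal fun i => (P i)⁻¹) * Q) *ᵥ (diagonal A *ᵥ T))
      + (diagonal P *ᵥ T) ⬝ᵥ (diagonal A *ᵥ (((diagonal fun i => (P i)⁻¹) * Q) *ᵥ T))
      = A a * T a ^ 2 - A b * T b ^ 2 := by
  rw [diagonal_mulVec_dotProduct_diagonal_inv_mul_mulVec hP,
    diagonal_mulVec_dotProduct_diagonal_mulVec_comm,
    diagonal_mulVec_diagonal_inv_mul_mulVec hP, dotProduct_mulVec_add_of_sbp hQ]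
  simp only [mulVec_diagonal]
  ring

lemma sbp_diffusion_eq (T u : ι → K) :
    (diagonal P *ᵥ T) ⬝ᵥ (((diagonal fun i => (P i)⁻¹) * Q) *ᵥ u)
      = T a * u a - T b * u b
        - (((diagonal fun i => (P i)⁻¹) * Q) *ᵥ T) ⬝ᵥ (diagonal P *ᵥ u) := by
  rw [diagonal_mulVec_dotProduct_diagonal_inv_mul_mulVec hP, dotProduct_comm _ (diagonal P *ᵥ u),
    diagonal_mulVec_dotProduct_diagonal_inv_mul_mulVec hP, ← dotProduct_mulVec_add_of_sbp hQ]
  ring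

end SBP

section Energy

variable {ι : Type*} [Fintype ι] [DecidableEq ι]

lemma differentiableAt_diagonal_mulVec {J T : ℝ → ι → ℝ} {τ : ℝ} (hJ : DifferentiableAt ℝ J τ)
    (hT : DifferentiableAt ℝ T τ) :
    DifferentiableAt ℝ (fun s => diagonal (J s) *ᵥ T s) τ := by
  refine differentiableAt_pi.2 fun i => ?_
  simp only [mulVec_diagonal]
  exact (differentiableAt_pi.1 hJ i).mul (differentiableAt_pi.1 hT i)

lemma hasDerivAt_dotProduct_diagonal_mulVec_diagonal_mulVec (P : ι → ℝ) {J T : ℝ → ι → ℝ}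
    {τ : ℝ} (hJ : DifferentiableAt ℝ J τ) (hT : DifferentiableAt ℝ T τ) :
    HasDerivAt (fun s => T s ⬝ᵥ (diagonal P *ᵥ (diagonal (J s) *ᵥ T s)))
      ((diagonal P *ᵥ T τ) ⬝ᵥ
        (deriv (fun s => diagonal (J s) *ᵥ T s) τ + diagonal (J τ) *ᵥ deriv T τ)) τ := by
  have hw := hasDerivAt_pi.1 (differentiableAt_diagonal_mulVec hJ hT).hasDerivAt
  have hT' := hasDerivAt_pi.1 hT.hasDerivAt
  have hE : (fun s => T s ⬝ᵥ (diagonal P *ᵥ (diagonal (J s) *ᵥ T s)))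
      = fun s => ∑ i, T s i * (P i * (diagonal (J s) *ᵥ T s) i) := by
    funext s
    simp only [dotProduct, mulVec_diagonal]
  rw [hE]
  refine (HasDerivAt.fun_sum fun i _ => (hT' i).fun_mul ((hw i).const_mul (P i))).congr_deriv ?_
  simp only [dotProduct, mulVec_diagonal, Pi.add_apply]
  exact Finset.sum_congr rfl fun _ _ => by ring

theorem hasDerivAt_energy_of_sbp_scheme {P : ι → ℝ} (hP : ∀ i, P i ≠ 0)
    {Q D : Matrix ι ι ℝ} (hD : D = (diagonal fun i => (P i)⁻¹) * Q) {a b : ι}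
    (hQ : Q + Qᵀ = Matrix.single a a 1 - Matrix.single b b 1) (β k : ℝ) {T J : ℝ → ι → ℝ}
    {τ : ℝ} (hT : DifferentiableAt ℝ T τ) (hJ : DifferentiableAt ℝ J τ) (A V : ι → ℝ)
    (hscheme : (β / 2) • (deriv (fun s => diagonal (J s) *ᵥ T s) τ
          + diagonal (J τ) *ᵥ deriv T τ
          + D *ᵥ (diagonal A *ᵥ T τ) + diagonal A *ᵥ (D *ᵥ T τ))
        = k • (D *ᵥ ((diagonal fun i => (J τ i)⁻¹) *ᵥ (D *ᵥ T τ)))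
          + (diagonal fun i => (P i)⁻¹) *ᵥ V) :
    HasDerivAt (fun s => β * (T s ⬝ᵥ (diagonal P *ᵥ (diagonal (J s) *ᵥ T s))))
      (-(β * A a * T τ a ^ 2) + β * A b * T τ b ^ 2
        + 2 * k * (T τ a * ((diagonal fun i => (J τ i)⁻¹) *ᵥ (D *ᵥ T τ)) a)
        - 2 * k * (T τ b * ((diagonal fun i => (J τ i)⁻¹) *ᵥ (D *ᵥ T τ)) b)
        + 2 * (T τ ⬝ᵥ V)
        - 2 * k * ((D *ᵥ T τ) ⬝ᵥ
          (diagonal P *ᵥ ((diagonal fun i => (J τ i)⁻¹) *ᵥ (D *ᵥ T τ))))) τ := by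
  subst hD
  refine ((hasDerivAt_dotProduct_diagonal_mulVec_diagonal_mulVec P hJ hT).const_mul β).congr_deriv
    ?_
  have htested := congrArg (fun y => (diagonal P *ᵥ T τ) ⬝ᵥ y) hscheme
  simp only [dotProduct_smul, dotProduct_add, smul_eq_mul] at htested
  have hpenalty : (diagonal P *ᵥ T τ) ⬝ᵥ ((diagonal fun i => (P i)⁻¹) *ᵥ V) = T τ ⬝ᵥ V := by
    rw [diagonal_mulVec_dotProduct, diagonal_mulVec_diagonal_inv_mulVec hP]
  rw [dotProduct_add]
  linear_combination 2 * htested - β * sbp_split_advection_eq hP hQ A (T τ)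
    + 2 * k * sbp_diffusion_eq hP hQ (T τ) ((diagonal fun i => (J τ i)⁻¹) *ᵥ
      (((diagonal fun i => (P i)⁻¹) * Q) *ᵥ T τ)) + 2 * hpenalty

end Energy

/-- The grids have `n + 2` nodes indexed by `Fin (n + 2)`; the interface is the last node
`Fin.last (n + 1)` of the vapor grid and the first node `0` of the liquid grid. The diagonal
matrices `P`, `J`, `A` are given by their diagonal entries. -/
theorem stmt_19_general (n : ℕ)
    (Pξ Pη : Fin (n + 2) → ℝ) (hPξ : ∀ i, 0 < Pξ i) (hPη : ∀ i, 0 < Pη i)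
    (Qξ Qη : Matrix (Fin (n + 2)) (Fin (n + 2)) ℝ)
    (hSBPξ : Qξ + Qξᵀ = Matrix.single (Fin.last (n + 1)) (Fin.last (n + 1)) 1
        - Matrix.single 0 0 1)
    (hSBPη : Qη + Qηᵀ = Matrix.single (Fin.last (n + 1)) (Fin.last (n + 1)) 1
        - Matrix.single 0 0 1)
    (Dξ Dη : Matrix (Fin (n + 2)) (Fin (n + 2)) ℝ)
    (hDξ : Dξ = (Matrix.diagonal fun i => (Pξ i)⁻¹) * Qξ)
    (hDη : Dη = (Matrix.diagonal fun i => (Pη i)⁻¹) * Qη)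
    (βv βl kv kl Tδ σv1 σv2 σv3 σl1 σl2 σl3 : ℝ)
    (Tv Tl : ℝ → Fin (n + 2) → ℝ) (hTv : Differentiable ℝ Tv) (hTl : Differentiable ℝ Tl)
    (Jv Jl : ℝ → Fin (n + 2) → ℝ) (hJv : Differentiable ℝ Jv) (hJl : Differentiable ℝ Jl)
    (Av Al : ℝ → Fin (n + 2) → ℝ)
    (hschemev : ∀ τ : ℝ,
      (βv / 2) • (deriv (fun s => Matrix.diagonal (Jv s) *ᵥ Tv s) τ
          + Matrix.diagonal (Jv τ) *ᵥ deriv Tv τ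
          + Dξ *ᵥ (Matrix.diagonal (Av τ) *ᵥ Tv τ)
          + Matrix.diagonal (Av τ) *ᵥ (Dξ *ᵥ Tv τ))
        = kv • (Dξ *ᵥ ((Matrix.diagonal fun i => (Jv τ i)⁻¹) *ᵥ (Dξ *ᵥ Tv τ)))
          + (Matrix.diagonal fun i => (Pξ i)⁻¹) *ᵥ
            (σv1 • ((Tv τ (Fin.last (n + 1)) - Tδ) • (Pi.single (Fin.last (n + 1)) 1 : Fin (n + 2) → ℝ))
              + σv2 • ((Tv τ (Fin.last (n + 1)) - Tl τ 0) • (Pi.single (Fin.last (n + 1)) 1 : Fin (n + 2) → ℝ))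
              + σv3 • (Dξᵀ *ᵥ ((Tv τ (Fin.last (n + 1)) - Tδ) • (Pi.single (Fin.last (n + 1)) 1 : Fin (n + 2) → ℝ)))))
    (hschemel : ∀ τ : ℝ,
      (βl / 2) • (deriv (fun s => Matrix.diagonal (Jl s) *ᵥ Tl s) τ
          + Matrix.diagonal (Jl τ) *ᵥ deriv Tl τ
          + Dη *ᵥ (Matrix.diagonal (Al τ) *ᵥ Tl τ)
          + Matrix.diagonal (Al τ) *ᵥ (Dη *ᵥ Tl τ))
        = kl • (Dη *ᵥ ((Matrix.diagonal fun i => (Jl τ i)⁻¹) *ᵥ (Dη *ᵥ Tl τ)))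
          + (Matrix.diagonal fun i => (Pη i)⁻¹) *ᵥ
            (σl1 • ((Tl τ 0 - Tδ) • (Pi.single 0 1 : Fin (n + 2) → ℝ))
              + σl2 • ((Tl τ 0 - Tv τ (Fin.last (n + 1))) • (Pi.single 0 1 : Fin (n + 2) → ℝ))
              + σl3 • (Dηᵀ *ᵥ ((Tl τ 0 - Tδ) • (Pi.single 0 1 : Fin (n + 2) → ℝ))))) :
    ∀ τ : ℝ,
      deriv (fun s => βv * (Tv s ⬝ᵥ (Matrix.diagonal Pξ *ᵥ (Matrix.diagonal (Jv s) *ᵥ Tv s)))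
          + βl * (Tl s ⬝ᵥ (Matrix.diagonal Pη *ᵥ (Matrix.diagonal (Jl s) *ᵥ Tl s)))) τ
        + 2 * kv * ((Dξ *ᵥ Tv τ) ⬝ᵥ (Matrix.diagonal Pξ *ᵥ
            ((Matrix.diagonal fun i => (Jv τ i)⁻¹) *ᵥ (Dξ *ᵥ Tv τ))))
        + 2 * kl * ((Dη *ᵥ Tl τ) ⬝ᵥ (Matrix.diagonal Pη *ᵥ
            ((Matrix.diagonal fun i => (Jl τ i)⁻¹) *ᵥ (Dη *ᵥ Tl τ))))
      = (-βv * Av τ (Fin.last (n + 1)) * (Tv τ (Fin.last (n + 1))) ^ 2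
          + 2 * kv * Tv τ (Fin.last (n + 1))
            * (((Matrix.diagonal fun i => (Jv τ i)⁻¹) *ᵥ (Dξ *ᵥ Tv τ)) (Fin.last (n + 1)))
          + βl * Al τ 0 * (Tl τ 0) ^ 2
          - 2 * kl * Tl τ 0 * (((Matrix.diagonal fun i => (Jl τ i)⁻¹) *ᵥ (Dη *ᵥ Tl τ)) 0))
        + (2 * (σv1 * Tv τ (Fin.last (n + 1)) * (Tv τ (Fin.last (n + 1)) - Tδ)
              + σv2 * Tv τ (Fin.last (n + 1)) * (Tv τ (Fin.last (n + 1)) - Tl τ 0)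
              + σv3 * ((Dξ *ᵥ Tv τ) (Fin.last (n + 1))) * (Tv τ (Fin.last (n + 1)) - Tδ))
          + 2 * (σl1 * Tl τ 0 * (Tl τ 0 - Tδ)
              + σl2 * Tl τ 0 * (Tl τ 0 - Tv τ (Fin.last (n + 1)))
              + σl3 * ((Dη *ᵥ Tl τ) 0) * (Tl τ 0 - Tδ)))
        + (βv * Av τ 0 * (Tv τ 0) ^ 2
          - 2 * kv * Tv τ 0 * (((Matrix.diagonal fun i => (Jv τ i)⁻¹) *ᵥ (Dξ *ᵥ Tv τ)) 0)
          - βl * Al τ (Fin.last (n + 1)) * (Tl τ (Fin.last (n + 1))) ^ 2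
          + 2 * kl * Tl τ (Fin.last (n + 1))
            * (((Matrix.diagonal fun i => (Jl τ i)⁻¹) *ᵥ (Dη *ᵥ Tl τ)) (Fin.last (n + 1)))) := by
  intro τ
  have hv := hasDerivAt_energy_of_sbp_scheme (fun i => (hPξ i).ne') hDξ hSBPξ βv kv (hTv τ)
    (hJv τ) (Av τ) _ (hschemev τ)
  have hl := hasDerivAt_energy_of_sbp_scheme (fun i => (hPη i).ne') hDη hSBPη βl kl (hTl τ)
    (hJl τ) (Al τ) _ (hschemel τ)
  rw [(hv.fun_add hl).deriv, dotProduct_penalty_eq, dotProduct_penalty_eq]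
  ring

/-- Semi-discrete energy rate identity (4.3)–(4.5) for the SBP–SAT
discretization of the transformed two-phase evaporation model.  The grids have
n+2 ≥ 2 nodes indexed by `Fin (n+2)`; the interface is the last node
(`Fin.last (n+1)`) of the vapor grid and the first node (`0`) of the liquid
grid.  The diagonal matrices P_ξ, P_η, J_v, J_l, A_v, A_l are represented by
their diagonal entries; D_ξ = P_ξ⁻¹ Q_ξ, D_η = P_η⁻¹ Q_η; Q_ξ, Q_η satisfy the
SBP property Q + Qᵀ = E_N − E_0. -/
theorem stmt_19 (n : ℕ)
    (Pξ Pη : Fin (n + 2) → ℝ) (hPξ : ∀ i, 0 < Pξ i) (hPη : ∀ i, 0 < Pη i)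
    (Qξ Qη : Matrix (Fin (n + 2)) (Fin (n + 2)) ℝ)
    (hSBPξ : Qξ + Qξᵀ = Matrix.single (Fin.last (n + 1)) (Fin.last (n + 1)) 1
        - Matrix.single 0 0 1)
    (hSBPη : Qη + Qηᵀ = Matrix.single (Fin.last (n + 1)) (Fin.last (n + 1)) 1
        - Matrix.single 0 0 1)
    (Dξ Dη : Matrix (Fin (n + 2)) (Fin (n + 2)) ℝ)
    (hDξ : Dξ = (Matrix.diagonal fun i => (Pξ i)⁻¹) * Qξ)
    (hDη : Dη = (Matrix.diagonal fun i => (Pη i)⁻¹) * Qη)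
    (βv βl kv kl Tδ σv1 σv2 σv3 σl1 σl2 σl3 : ℝ)
    (Tv Tl : ℝ → Fin (n + 2) → ℝ) (hTv : Differentiable ℝ Tv) (hTl : Differentiable ℝ Tl)
    (Jv Jl : ℝ → Fin (n + 2) → ℝ) (hJv : Differentiable ℝ Jv) (hJl : Differentiable ℝ Jl)
    (hJvne : ∀ τ i, Jv τ i ≠ 0) (hJlne : ∀ τ i, Jl τ i ≠ 0)
    (Av Al : ℝ → Fin (n + 2) → ℝ)
    (hschemev : ∀ τ : ℝ,
      (βv / 2) • (deriv (fun s => Matrix.diagonal (Jv s) *ᵥ Tv s) τ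
          + Matrix.diagonal (Jv τ) *ᵥ deriv Tv τ
          + Dξ *ᵥ (Matrix.diagonal (Av τ) *ᵥ Tv τ)
          + Matrix.diagonal (Av τ) *ᵥ (Dξ *ᵥ Tv τ))
        = kv • (Dξ *ᵥ ((Matrix.diagonal fun i => (Jv τ i)⁻¹) *ᵥ (Dξ *ᵥ Tv τ)))
          + (Matrix.diagonal fun i => (Pξ i)⁻¹) *ᵥ
            (σv1 • ((Tv τ (Fin.last (n + 1)) - Tδ) • (Pi.single (Fin.last (n + 1)) 1 : Fin (n + 2) → ℝ))
              + σv2 • ((Tv τ (Fin.last (n + 1)) - Tl τ 0) • (Pi.single (Fin.last (n + 1)) 1 : Fin (n + 2) → ℝ))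
              + σv3 • (Dξᵀ *ᵥ ((Tv τ (Fin.last (n + 1)) - Tδ) • (Pi.single (Fin.last (n + 1)) 1 : Fin (n + 2) → ℝ)))))
    (hschemel : ∀ τ : ℝ,
      (βl / 2) • (deriv (fun s => Matrix.diagonal (Jl s) *ᵥ Tl s) τ
          + Matrix.diagonal (Jl τ) *ᵥ deriv Tl τ
          + Dη *ᵥ (Matrix.diagonal (Al τ) *ᵥ Tl τ)
          + Matrix.diagonal (Al τ) *ᵥ (Dη *ᵥ Tl τ))
        = kl • (Dη *ᵥ ((Matrix.diagonal fun i => (Jl τ i)⁻¹) *ᵥ (Dη *ᵥ Tl τ)))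
          + (Matrix.diagonal fun i => (Pη i)⁻¹) *ᵥ
            (σl1 • ((Tl τ 0 - Tδ) • (Pi.single 0 1 : Fin (n + 2) → ℝ))
              + σl2 • ((Tl τ 0 - Tv τ (Fin.last (n + 1))) • (Pi.single 0 1 : Fin (n + 2) → ℝ))
              + σl3 • (Dηᵀ *ᵥ ((Tl τ 0 - Tδ) • (Pi.single 0 1 : Fin (n + 2) → ℝ))))) :
    ∀ τ : ℝ,
      deriv (fun s => βv * (Tv s ⬝ᵥ (Matrix.diagonal Pξ *ᵥ (Matrix.diagonal (Jv s) *ᵥ Tv s)))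
          + βl * (Tl s ⬝ᵥ (Matrix.diagonal Pη *ᵥ (Matrix.diagonal (Jl s) *ᵥ Tl s)))) τ
        + 2 * kv * ((Dξ *ᵥ Tv τ) ⬝ᵥ (Matrix.diagonal Pξ *ᵥ
            ((Matrix.diagonal fun i => (Jv τ i)⁻¹) *ᵥ (Dξ *ᵥ Tv τ))))
        + 2 * kl * ((Dη *ᵥ Tl τ) ⬝ᵥ (Matrix.diagonal Pη *ᵥ
            ((Matrix.diagonal fun i => (Jl τ i)⁻¹) *ᵥ (Dη *ᵥ Tl τ))))
      = (-βv * Av τ (Fin.last (n + 1)) * (Tv τ (Fin.last (n + 1))) ^ 2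
          + 2 * kv * Tv τ (Fin.last (n + 1))
            * (((Matrix.diagonal fun i => (Jv τ i)⁻¹) *ᵥ (Dξ *ᵥ Tv τ)) (Fin.last (n + 1)))
          + βl * Al τ 0 * (Tl τ 0) ^ 2
          - 2 * kl * Tl τ 0 * (((Matrix.diagonal fun i => (Jl τ i)⁻¹) *ᵥ (Dη *ᵥ Tl τ)) 0))
        + (2 * (σv1 * Tv τ (Fin.last (n + 1)) * (Tv τ (Fin.last (n + 1)) - Tδ)
              + σv2 * Tv τ (Fin.last (n + 1)) * (Tv τ (Fin.last (n + 1)) - Tl τ 0)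
              + σv3 * ((Dξ *ᵥ Tv τ) (Fin.last (n + 1))) * (Tv τ (Fin.last (n + 1)) - Tδ))
          + 2 * (σl1 * Tl τ 0 * (Tl τ 0 - Tδ)
              + σl2 * Tl τ 0 * (Tl τ 0 - Tv τ (Fin.last (n + 1)))
              + σl3 * ((Dη *ᵥ Tl τ) 0) * (Tl τ 0 - Tδ)))
        + (βv * Av τ 0 * (Tv τ 0) ^ 2
          - 2 * kv * Tv τ 0 * (((Matrix.diagonal fun i => (Jv τ i)⁻¹) *ᵥ (Dξ *ᵥ Tv τ)) 0)
          - βl * Al τ (Fin.last (n + 1)) * (Tl τ (Fin.last (n + 1))) ^ 2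
          + 2 * kl * Tl τ (Fin.last (n + 1))
            * (((Matrix.diagonal fun i => (Jl τ i)⁻¹) *ᵥ (Dη *ᵥ Tl τ)) (Fin.last (n + 1)))) :=
  stmt_19_general n Pξ Pη hPξ hPη Qξ Qη hSBPξ hSBPη Dξ Dη hDξ hDη βv βl kv kl Tδ σv1 σv2 σv3 σl1 σl2
    σl3 Tv Tl hTv hTl Jv Jl hJv hJl Av Al hschemev hschemel
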